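/- arXiv:math/0508073 — 2 statements merged into one kernel-verified Lean document; each statement's English description precedes it below -/
import Mathlib

section
/- Let (λ_j) be a strictly decreasing positive summable sequence with λ_j = φ(1/j) for a convex function φ with φ(0)=0. Then there exists a constant C such that for all sufficiently large j, Σ_{l=j+1}^{2j} λ_l/(λ_j − λ_l) ≤ C·j·log j. -/
lemma harm_le (j : ℕ) : ∑ m ∈ Finset.Icc 1 j, (1:ℝ)/m ≤ 1 + Real.log j := by
  induction j with
  | zero => simp
  | succ n ih =>
    rcases Nat.eq_zero_or_pos n with rfl | hn
    · simp
    rw [Finset.sum_Icc_succ_top (by omega)]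
    have hn' : (0:ℝ) < n := by exact_mod_cast hn
    have key : (1:ℝ)/(n+1) ≤ Real.log (n+1) - Real.log n := by
      have h := Real.one_sub_inv_le_log_of_pos (x := ((n:ℝ)+1)/n) (by positivity)
      rw [Real.log_div (by positivity) (by positivity)] at h
      have h2 : (((n:ℝ)+1)/n)⁻¹ = n/(n+1) := by field_simp
      rw [h2] at h
      have h3 : (1:ℝ) - (n:ℝ)/(n+1) = 1/(n+1) := by field_simp; ring
      linarith [h3 ▸ h]
    push_cast
    linarith

/-- If `(λ_j)` is strictly decreasing, positive, summable, `λ_j = φ(1/j)` for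
convex `φ` with `φ 0 = 0`, then `Σ_{l=j+1}^{2j} λ_l/(λ_j − λ_l) ≤ C·j·log j`
for large `j`. -/
theorem stmt4 (φ : ℝ → ℝ) (hconv : ConvexOn ℝ (Set.Icc (0:ℝ) 1) φ) (h0 : φ 0 = 0)
    (lam : ℕ → ℝ) (hpos : ∀ j, 1 ≤ j → 0 < lam j)
    (hdec : ∀ j k : ℕ, 1 ≤ j → j < k → lam k < lam j)
    (hsum : Summable lam)
    (hlam : ∀ j : ℕ, 1 ≤ j → lam j = φ (1 / j)) :
    ∃ C : ℝ, ∀ᶠ j : ℕ in Filter.atTop,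
      ∑ l ∈ Finset.Icc (j + 1) (2 * j), lam l / (lam j - lam l) ≤ C * j * Real.log j := by
  refine ⟨4, Filter.eventually_atTop.2 ⟨3, fun j hj => ?_⟩⟩
  have hj1 : 1 ≤ j := by omega
  have hjR : (1:ℝ) ≤ j := by exact_mod_cast hj1
  have hjpos : (0:ℝ) < j := by linarith
  have term_bound : ∀ l ∈ Finset.Icc (j+1) (2*j),
      lam l / (lam j - lam l) ≤ 2 * j * (1 / ((l:ℝ) - j)) := by
    intro l hl
    rw [Finset.mem_Icc] at hl
    have hl1 : 1 ≤ l := by omega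
    have hlR : (1:ℝ) ≤ l := by exact_mod_cast hl1
    have hlj : (j:ℝ) < l := by exact_mod_cast hl.1
    have hl2j : (l:ℝ) ≤ 2*j := by exact_mod_cast hl.2
    have hlpos : (0:ℝ) < l := by linarith
    have hsec := hconv.secant_mono (a := 0) (x := 1/(l:ℝ)) (y := 1/(j:ℝ))
      ⟨le_refl 0, zero_le_one⟩
      ⟨by positivity, by rw [div_le_one hlpos]; linarith⟩
      ⟨by positivity, by rw [div_le_one hjpos]; linarith⟩
      (by positivity) (by positivity)
      (by apply div_le_div_of_nonneg_left one_pos.le hjpos; linarith)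
    rw [h0] at hsec
    simp only [sub_zero] at hsec
    rw [div_div_eq_mul_div, div_div_eq_mul_div, div_one, div_one,
      ← hlam l hl1, ← hlam j hj1] at hsec
    -- hsec : lam l * l ≤ lam j * j
    have hgap0 : 0 < lam j - lam l := by linarith [hdec j l hj1 hl.1]
    have hlampos := hpos j hj1
    have hlamll := hdec j l hj1 hl.1
    have hljpos : (0:ℝ) < (l:ℝ) - j := by linarith
    rw [mul_one_div, div_le_div_iff₀ hgap0 hljpos]
    have key : lam j * ((l:ℝ) - j) ≤ (lam j - lam l) * l := by nlinarith
    have h1 : lam l * ((l:ℝ) - j) ≤ lam j * ((l:ℝ) - j) := by nlinarith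
    have h2 : (lam j - lam l) * l ≤ (lam j - lam l) * (2*j) := by nlinarith
    linarith
  calc ∑ l ∈ Finset.Icc (j + 1) (2 * j), lam l / (lam j - lam l)
      ≤ ∑ l ∈ Finset.Icc (j + 1) (2 * j), 2 * (j:ℝ) * (1 / ((l:ℝ) - j)) :=
        Finset.sum_le_sum term_bound
    _ = 2 * j * ∑ l ∈ Finset.Icc (j + 1) (2 * j), (1 / ((l:ℝ) - j)) := by
        rw [Finset.mul_sum]
    _ = 2 * j * ∑ m ∈ Finset.Icc 1 j, (1:ℝ)/m := by
        congr 1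
        rw [show 2*j = j + j by ring, show j + 1 = j + 1 from rfl,
          ← Finset.map_add_left_Icc, Finset.sum_map]
        refine Finset.sum_congr rfl fun m hm => ?_
        rw [Finset.mem_Icc] at hm
        have : ((addLeftEmbedding j) m : ℝ) = (j:ℝ) + m := by
          simp [addLeftEmbedding]
        rw [this]
        ring_nf
    _ ≤ 2 * j * (1 + Real.log j) := by
        have := harm_le j
        nlinarith
    _ ≤ 4 * j * Real.log j := by
        have hlog : 1 ≤ Real.log j := by
          rw [Real.le_log_iff_exp_le hjpos]
          calc Real.exp 1 ≤ 2.7182818286 := Real.exp_one_lt_d9.le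
            _ ≤ 3 := by norm_num
            _ ≤ j := by exact_mod_cast hj
        nlinarith
end

section
/- Let (λ_j) be strictly decreasing positive eigenvalues satisfying λ_j = φ(1/j) for convex φ with φ(0)=0 and λ_j ≤ C/(j log j), and let δ_j = λ_j − λ_{j+1}. Then Σ_{j=1}^{k} λ_j/δ_j ≤ C'·k²·log k for k large, where C' is a constant. -/
/-- If `(λ_j)` is strictly decreasing positive, `λ_j = φ(1/j)` for convex `φ`
with `φ 0 = 0`, `λ_j ≤ C/(j log j)` for large `j`, and `δ_j = λ_j − λ_{j+1}`,
then `Σ_{j=1}^{k} λ_j/δ_j ≤ C'·k²·log k` for large `k`. -/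
theorem stmt14 (φ : ℝ → ℝ) (hconv : ConvexOn ℝ (Set.Icc (0:ℝ) 1) φ) (h0 : φ 0 = 0)
    (lam : ℕ → ℝ) (hpos : ∀ j, 1 ≤ j → 0 < lam j)
    (hdec : ∀ j k : ℕ, 1 ≤ j → j < k → lam k < lam j)
    (hlam : ∀ j : ℕ, 1 ≤ j → lam j = φ (1 / j))
    (C : ℝ) (hC : ∀ᶠ j : ℕ in Filter.atTop, lam j ≤ C / (j * Real.log j)) :
    ∃ C' : ℝ, ∀ᶠ k : ℕ in Filter.atTop,
      ∑ j ∈ Finset.Icc 1 k, lam j / (lam j - lam (j + 1))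
        ≤ C' * k ^ 2 * Real.log k := by
  -- Key: λ_j / δ_j ≤ j + 1
  have key : ∀ j : ℕ, 1 ≤ j → lam j / (lam j - lam (j + 1)) ≤ (j : ℝ) + 1 := by
    intro j hj
    have hjR : (1 : ℝ) ≤ (j : ℝ) := by exact_mod_cast hj
    have hj0 : (0 : ℝ) < (j : ℝ) := by linarith
    have hδ : 0 < lam j - lam (j + 1) :=
      sub_pos.2 (hdec j (j + 1) hj (Nat.lt_succ_self j))
    rw [div_le_iff₀ hδ]
    -- convexity: λ_{j+1} ≤ j/(j+1) λ_j
    have hx : (1 / (j : ℝ)) ∈ Set.Icc (0:ℝ) 1 := by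
      constructor
      · positivity
      · rw [div_le_one hj0]; linarith
    have hy : (0 : ℝ) ∈ Set.Icc (0:ℝ) 1 := by constructor <;> norm_num
    have ha : (0:ℝ) ≤ (j : ℝ) / ((j : ℝ) + 1) := by positivity
    have hb : (0:ℝ) ≤ 1 / ((j : ℝ) + 1) := by positivity
    have hab : (j : ℝ) / ((j : ℝ) + 1) + 1 / ((j : ℝ) + 1) = 1 := by
      field_simp
    have hcv := hconv.2 hx hy ha hb hab
    have harg : (j : ℝ) / ((j : ℝ) + 1) * (1 / (j : ℝ)) + 1 / ((j : ℝ) + 1) * 0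
        = 1 / ((j : ℝ) + 1) := by
      field_simp; ring
    simp only [smul_eq_mul] at hcv
    rw [harg, h0] at hcv
    have hcast : ((j + 1 : ℕ) : ℝ) = (j : ℝ) + 1 := by push_cast; ring
    have hlj1 : lam (j + 1) = φ (1 / ((j : ℝ) + 1)) := by
      rw [hlam (j + 1) (by omega), hcast]
    have hlj : lam j = φ (1 / (j : ℝ)) := hlam j hj
    -- hcv : φ(1/(j+1)) ≤ j/(j+1) φ(1/j) + 0
    rw [← hlj1, ← hlj] at hcv
    have hj1 : (0:ℝ) < (j : ℝ) + 1 := by linarith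
    have : ((j : ℝ) + 1) * lam (j + 1) ≤ (j : ℝ) * lam j := by
      have := mul_le_mul_of_nonneg_left hcv (le_of_lt hj1)
      calc ((j : ℝ) + 1) * lam (j + 1) ≤ ((j : ℝ) + 1) * ((j : ℝ) / ((j : ℝ) + 1) * lam j + 1 / ((j : ℝ) + 1) * 0) := this
        _ = (j : ℝ) * lam j := by field_simp; ring
    nlinarith
  refine ⟨2, ?_⟩
  filter_upwards [Filter.eventually_ge_atTop 3] with k hk
  have hkR : (3 : ℝ) ≤ (k : ℝ) := by exact_mod_cast hk
  have hsum : ∑ j ∈ Finset.Icc 1 k, lam j / (lam j - lam (j + 1))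
      ≤ ∑ j ∈ Finset.Icc 1 k, ((k : ℝ) + 1) := by
    apply Finset.sum_le_sum
    intro j hj
    rw [Finset.mem_Icc] at hj
    calc lam j / (lam j - lam (j + 1)) ≤ (j : ℝ) + 1 := key j hj.1
      _ ≤ (k : ℝ) + 1 := by
          have : (j : ℝ) ≤ (k : ℝ) := by exact_mod_cast hj.2
          linarith
  have hcard : ∑ j ∈ Finset.Icc 1 k, ((k : ℝ) + 1) = (k : ℝ) * ((k : ℝ) + 1) := by
    rw [Finset.sum_const, Nat.card_Icc]
    simp only [nsmul_eq_mul]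
    have : (k + 1 - 1 : ℕ) = k := by omega
    rw [this]
  have hlog : (1 : ℝ) ≤ Real.log k := by
    have : Real.exp 1 ≤ (k : ℝ) :=
      le_trans (le_of_lt (lt_trans Real.exp_one_lt_d9 (by norm_num))) hkR
    calc (1:ℝ) = Real.log (Real.exp 1) := (Real.log_exp 1).symm
      _ ≤ Real.log k := Real.log_le_log (Real.exp_pos 1) this
  calc ∑ j ∈ Finset.Icc 1 k, lam j / (lam j - lam (j + 1))
      ≤ (k : ℝ) * ((k : ℝ) + 1) := by rw [← hcard]; exact hsum
    _ ≤ 2 * (k : ℝ) ^ 2 := by nlinarith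
    _ ≤ 2 * (k : ℝ) ^ 2 * Real.log k := by nlinarith
end
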